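/- arXiv:math/0410161 — 2 statements merged into one kernel-verified Lean document; each statement's English description precedes it below -/
import Mathlib

section
/- Let γ be a family of probability kernels indexed by finite subsets Λ of ℤ^d satisfying the consistency condition γ_{Λ'} γ_Λ = γ_{Λ'} for Λ ⊂ Λ', and assume each γ_Λ(·|ω) is strictly positive on cylinder events. Then for a finite set Λ = {x_1, …, x_N} enumerated in lexicographic order, and configurations σ, ω, the ratio γ_Λ(σ_Λ | ω)/γ_Λ(+_Λ | ω) equals the telescoping product ∏_{i=1}^N γ_{x_i}(σ_{x_i} | σ_{Λ_{<x_i}} +_{Λ_{>x_i}} ω_{Λ^c}) / γ_{x_i}(+_{x_i} | σ_{Λ_{<x_i}} +_{Λ_{>x_i}} ω_{Λ^c}). -/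
/-- Telescoping identity for a nonnull consistent family of finite-volume kernels:
for a finite volume `Λ` enumerated (in lexicographic order) by the list `xs`, the
ratio `γ_Λ(σ|ω) / γ_Λ(+|ω)` equals the product of single-site ratios
`γ_{x_i}(σ_{x_i} | σ_{Λ_{<x_i}} +_{Λ_{>x_i}} ω_{Λᶜ}) / γ_{x_i}(+ | ⋯)`. -/
theorem specification_telescoping {d : ℕ} {E : Type*} [Fintype E] [DecidableEq E]
    (plus : E)
    (γ : Finset (Fin d → ℤ) → ((Fin d → ℤ) → E) → ((Fin d → ℤ) → E) → ℝ)
    -- nonnullness: all cylinder probabilities are strictly positive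
    (hpos : ∀ Λ σ ω, 0 < γ Λ σ ω)
    -- `γ Λ σ ω` depends on `σ` only through its restriction to `Λ` (properness)
    (hlocσ : ∀ Λ σ σ' ω, (∀ x ∈ Λ, σ x = σ' x) → γ Λ σ ω = γ Λ σ' ω)
    -- `γ Λ σ ω` depends on `ω` only through its restriction to `Λᶜ` (properness)
    (hlocω : ∀ Λ σ ω ω', (∀ x ∉ Λ, ω x = ω' x) → γ Λ σ ω = γ Λ σ ω')
    -- consistency of the kernels with the single-site kernels
    (hcons : ∀ (Λ : Finset (Fin d → ℤ)) (x : Fin d → ℤ), x ∈ Λ →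
      ∀ σ ω : (Fin d → ℤ) → E,
        γ Λ σ ω =
          (∑ e : E, γ Λ (Function.update σ x e) ω) *
            γ {x} σ (fun y => if y ∈ Λ then σ y else ω y))
    -- a lexicographic linear order on sites, and an increasing enumeration of `Λ`
    (lex : LinearOrder (Fin d → ℤ))
    (xs : List (Fin d → ℤ)) (Λ : Finset (Fin d → ℤ))
    (hxs : xs.toFinset = Λ) (hnd : xs.Nodup) (hsorted : xs.Pairwise lex.lt)
    (σ ω : (Fin d → ℤ) → E) :
    γ Λ σ ω / γ Λ (fun _ => plus) ω =
      ∏ i : Fin xs.length,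
        γ {xs.get i} σ
            (fun y => if y ∈ (xs.take i.1).toFinset then σ y
              else if y ∈ Λ then plus else ω y) /
          γ {xs.get i} (fun _ => plus)
            (fun y => if y ∈ (xs.take i.1).toFinset then σ y
              else if y ∈ Λ then plus else ω y) := by
  classical
  set f : ℕ → ℝ := fun k =>
    γ Λ (fun y => if y ∈ (xs.take k).toFinset then σ y else plus) ω with hf
  have hfpos : ∀ k, 0 < f k := fun k => hpos _ _ _
  -- telescoping
  have tel : ∀ n, ∏ i ∈ Finset.range n, (f (i + 1) / f i) = f n / f 0 := by
    intro n
    induction n with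
    | zero => rw [Finset.prod_range_zero, div_self (hfpos 0).ne']
    | succ n ih =>
      rw [Finset.prod_range_succ, ih, div_mul_div_comm, mul_comm (f 0) (f n),
        mul_div_mul_left _ _ (hfpos n).ne']
  -- key single-step identity
  have key : ∀ i : Fin xs.length,
      f (i.1 + 1) / f i.1 =
        γ {xs.get i} σ
            (fun y => if y ∈ (xs.take i.1).toFinset then σ y
              else if y ∈ Λ then plus else ω y) /
          γ {xs.get i} (fun _ => plus)
            (fun y => if y ∈ (xs.take i.1).toFinset then σ y
              else if y ∈ Λ then plus else ω y) := by
    intro i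
    set x := xs.get i with hxdef
    have hxΛ : x ∈ Λ := by
      rw [← hxs, List.mem_toFinset]
      exact List.get_mem xs i
    have hAsub : ∀ y, y ∈ (xs.take i.1).toFinset → y ∈ Λ := by
      intro y hy
      rw [← hxs, List.mem_toFinset]
      rw [List.mem_toFinset] at hy
      exact List.mem_of_mem_take hy
    have hxA : x ∉ (xs.take i.1).toFinset := by
      rw [List.mem_toFinset]
      intro hmem
      have hxd : x ∈ xs.drop i.1 := by
        have : (xs.drop i.1)[0]'(by simp [i.isLt]) = x := by
          simp [List.getElem_drop, hxdef]
        rw [← this]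
        exact List.getElem_mem _
      exact (List.disjoint_take_drop hnd le_rfl) hmem hxd
    have htake : xs.take (i.1 + 1) = xs.take i.1 ++ [x] := by
      rw [List.take_succ]
      congr
      rw [List.getElem?_eq_getElem i.isLt]
      rfl
    have hmem : ∀ y, y ∈ (xs.take (i.1 + 1)).toFinset ↔
        y = x ∨ y ∈ (xs.take i.1).toFinset := by
      intro y
      simp [htake, or_comm]
    set τ' : (Fin d → ℤ) → E :=
      fun y => if y ∈ (xs.take (i.1 + 1)).toFinset then σ y else plus with hτ'
    set τ : (Fin d → ℤ) → E :=
      fun y => if y ∈ (xs.take i.1).toFinset then σ y else plus with hτ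
    set η : (Fin d → ℤ) → E :=
      fun y => if y ∈ (xs.take i.1).toFinset then σ y
        else if y ∈ Λ then plus else ω y with hη
    have h1 := hcons Λ x hxΛ τ' ω
    have h2 := hcons Λ x hxΛ τ ω
    have hupd : ∀ e : E, Function.update τ' x e = Function.update τ x e := by
      intro e
      funext y
      rcases eq_or_ne y x with h | h
      · subst h; simp
      · simp only [Function.update_apply, if_neg h, hτ', hτ]
        have : y ∈ (xs.take (i.1 + 1)).toFinset ↔ y ∈ (xs.take i.1).toFinset := by
          rw [hmem y]; simp [h]
        simp [this]
    have hS : (∑ e : E, γ Λ (Function.update τ' x e) ω)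
        = ∑ e : E, γ Λ (Function.update τ x e) ω := by
      refine Finset.sum_congr rfl fun e _ => by rw [hupd e]
    have hSpos : 0 < ∑ e : E, γ Λ (Function.update τ x e) ω := by
      have : Nonempty E := ⟨plus⟩
      exact Finset.sum_pos (fun e _ => hpos _ _ _) Finset.univ_nonempty
    -- identify the single-site factors
    have ha : γ {x} τ' (fun y => if y ∈ Λ then τ' y else ω y) = γ {x} σ η := by
      have s1 : γ {x} τ' (fun y => if y ∈ Λ then τ' y else ω y)
          = γ {x} σ (fun y => if y ∈ Λ then τ' y else ω y) := by
        refine hlocσ _ _ _ _ fun y hy => ?_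
        rw [Finset.mem_singleton] at hy
        subst hy
        simp only [hτ']
        rw [if_pos ((hmem x).2 (Or.inl rfl))]
      rw [s1]
      refine hlocω _ _ _ _ fun y hy => ?_
      rw [Finset.mem_singleton] at hy
      simp only [hτ', hη]
      by_cases hyA : y ∈ (xs.take i.1).toFinset
      · simp [hyA, hAsub y hyA, (hmem y).2 (Or.inr hyA)]
      · have hyA' : y ∉ (xs.take (i.1 + 1)).toFinset := by
          rw [hmem y]; push_neg; exact ⟨hy, hyA⟩
        by_cases hyΛ : y ∈ Λ <;> simp [hyA, hyA', hyΛ]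
    have hb : γ {x} τ (fun y => if y ∈ Λ then τ y else ω y)
        = γ {x} (fun _ => plus) η := by
      have s1 : γ {x} τ (fun y => if y ∈ Λ then τ y else ω y)
          = γ {x} (fun _ => plus) (fun y => if y ∈ Λ then τ y else ω y) := by
        refine hlocσ _ _ _ _ fun y hy => ?_
        rw [Finset.mem_singleton] at hy
        subst hy
        simp only [hτ]
        rw [if_neg hxA]
      rw [s1]
      refine hlocω _ _ _ _ fun y hy => ?_
      simp only [hτ, hη]
      by_cases hyA : y ∈ (xs.take i.1).toFinset
      · simp [hyA, hAsub y hyA]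
      · by_cases hyΛ : y ∈ Λ <;> simp [hyA, hyΛ]
    have hf1 : f (i.1 + 1) = (∑ e : E, γ Λ (Function.update τ x e) ω) * γ {x} σ η := by
      rw [hf]; simp only []
      rw [h1, hS, ha]
    have hf2 : f i.1 = (∑ e : E, γ Λ (Function.update τ x e) ω)
        * γ {x} (fun _ => plus) η := by
      rw [hf]; simp only []
      rw [h2, hb]
    rw [hf1, hf2, mul_div_mul_left _ _ hSpos.ne']
  -- assemble
  have hN : f xs.length = γ Λ σ ω := by
    refine hlocσ _ _ _ _ fun y hy => ?_
    have : y ∈ (xs.take xs.length).toFinset := by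
      rw [List.take_length, hxs]; exact hy
    exact if_pos this
  have h0 : f 0 = γ Λ (fun _ => plus) ω := by
    refine hlocσ _ _ _ _ fun y _ => ?_
    simp
  calc γ Λ σ ω / γ Λ (fun _ => plus) ω = f xs.length / f 0 := by rw [hN, h0]
    _ = ∏ i ∈ Finset.range xs.length, (f (i + 1) / f i) := (tel xs.length).symm
    _ = ∏ i : Fin xs.length, (f (i.1 + 1) / f i.1) :=
        (Fin.prod_univ_eq_prod_range (fun k => f (k + 1) / f k) xs.length).symm
    _ = _ := Finset.prod_congr rfl fun i _ => key i
end

section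
/- Let γ⁺ be a monotone specification on Ω = {−1,+1}^{ℤ^d} (i.e., γ_Λ⁺ f is increasing in the boundary condition whenever f is increasing), and suppose γ_Λ⁺(·|+) converges weakly to ν⁺ as Λ ↑ ℤ^d. Then any probability measure μ consistent with γ⁺ satisfies μ ≼ ν⁺ in stochastic domination: μ(f) ≤ ν⁺(f) for all bounded increasing f. -/
open MeasureTheory Filter

/-- The cube `[-n, n]^d ∩ ℤ^d`. -/
noncomputable def cube (d n : ℕ) : Finset (Fin d → ℤ) :=
  Fintype.piFinset fun _ => Finset.Icc (-(n : ℤ)) (n : ℤ)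

lemma cube_mono {d m n : ℕ} (h : m ≤ n) : cube d m ⊆ cube d n := by
  intro x hx
  simp only [cube, Fintype.mem_piFinset, Finset.mem_Icc] at hx ⊢
  intro i
  have h1 := hx i
  have h2 : (m : ℤ) ≤ n := by exact_mod_cast h
  omega

lemma mem_cube_of_le {d : ℕ} (x : Fin d → ℤ) {n : ℕ}
    (h : ∀ i, (x i).natAbs ≤ n) : x ∈ cube d n := by
  simp only [cube, Fintype.mem_piFinset, Finset.mem_Icc]
  intro i
  have := h i
  omega

/-- A function depending only on coordinates in a finite set is continuous. -/
lemma continuous_of_depends_on {d : ℕ} (s : Finset (Fin d → ℤ))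
    (g : ((Fin d → ℤ) → Bool) → ℝ)
    (h : ∀ η η' : (Fin d → ℤ) → Bool, (∀ x ∈ s, η x = η' x) → g η = g η') :
    Continuous g := by
  classical
  let r : ((Fin d → ℤ) → Bool) → ({x // x ∈ s} → Bool) := fun η x => η x.1
  let e : ({x // x ∈ s} → Bool) → ((Fin d → ℤ) → Bool) := fun u x =>
    if hx : x ∈ s then u ⟨x, hx⟩ else true
  have hge : g = (g ∘ e) ∘ r := by
    funext η
    exact h η (e (r η)) (by intro x hx; simp [e, r, hx])
  rw [hge]
  exact (continuous_of_discreteTopology).comp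
    (continuous_pi fun x => continuous_apply x.1)

/-- Monotone specification: any measure consistent with `γ⁺` is stochastically
dominated by the weak limit `ν⁺` of `γ_Λ⁺(·|+)` along cubes. -/
theorem consistent_dominated_by_plus_limit {d : ℕ}
    (γ : Finset (Fin d → ℤ) → ((Fin d → ℤ) → Bool) → Measure ((Fin d → ℤ) → Bool))
    (hprob : ∀ Λ ω, IsProbabilityMeasure (γ Λ ω))
    -- monotone specification: `γ_Λ f` is increasing in the boundary condition for
    -- increasing `f`
    (hmono : ∀ (Λ : Finset (Fin d → ℤ)) (ω ω' : (Fin d → ℤ) → Bool), ω ≤ ω' →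
      ∀ f : ((Fin d → ℤ) → Bool) → ℝ, Monotone f → Measurable f →
        (∃ M, ∀ ξ, |f ξ| ≤ M) →
        ∫ ξ, f ξ ∂(γ Λ ω) ≤ ∫ ξ, f ξ ∂(γ Λ ω'))
    (νp : Measure ((Fin d → ℤ) → Bool)) [IsProbabilityMeasure νp]
    -- weak convergence of `γ_Λ(·|+)` to `ν⁺` along cubes
    (hweak : ∀ f : ((Fin d → ℤ) → Bool) → ℝ, Continuous f →
      Tendsto (fun n => ∫ ξ, f ξ ∂(γ (cube d n) (fun _ => true)))
        atTop (nhds (∫ ξ, f ξ ∂νp)))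
    (μ : Measure ((Fin d → ℤ) → Bool)) [IsProbabilityMeasure μ]
    -- `μ` is consistent with `γ`: `μ γ_Λ = μ`
    (hcons : ∀ (Λ : Finset (Fin d → ℤ)) (f : ((Fin d → ℤ) → Bool) → ℝ),
      Measurable f → (∃ M, ∀ ξ, |f ξ| ≤ M) →
      ∫ ω, (∫ ξ, f ξ ∂(γ Λ ω)) ∂μ = ∫ ξ, f ξ ∂μ) :
    ∀ f : ((Fin d → ℤ) → Bool) → ℝ, Monotone f → Measurable f →
      (∃ M, ∀ ξ, |f ξ| ≤ M) →
      ∫ ξ, f ξ ∂μ ≤ ∫ ξ, f ξ ∂νp := by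
  classical
  -- Step 0: the claim for continuous increasing functions with values in `[0,1]`.
  have key : ∀ F : ((Fin d → ℤ) → Bool) → ℝ, Continuous F → Monotone F →
      (∀ ξ, 0 ≤ F ξ) → (∀ ξ, F ξ ≤ 1) → ∫ ξ, F ξ ∂μ ≤ ∫ ξ, F ξ ∂νp := by
    intro F hFc hFm hF0 hF1
    have hFmeas : Measurable F := hFc.measurable
    have hFb : ∃ M, ∀ ξ, |F ξ| ≤ M :=
      ⟨1, fun ξ => abs_le.2 ⟨by linarith [hF0 ξ], hF1 ξ⟩⟩
    have step : ∀ m : ℕ,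
        ∫ ξ, F ξ ∂μ ≤ ∫ ξ, F ξ ∂(γ (cube d m) (fun _ => true)) := by
      intro m
      have hpt : ∀ ω, ∫ ξ, F ξ ∂(γ (cube d m) ω)
          ≤ ∫ ξ, F ξ ∂(γ (cube d m) (fun _ => true)) :=
        fun ω => hmono _ ω _ (fun x => Bool.le_true _) F hFm hFmeas hFb
      have hc0 : 0 ≤ ∫ ξ, F ξ ∂(γ (cube d m) (fun _ => true)) :=
        integral_nonneg hF0
      rw [← hcons (cube d m) F hFmeas hFb]
      by_cases hint : Integrable (fun ω => ∫ ξ, F ξ ∂(γ (cube d m) ω)) μ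
      · calc ∫ ω, (∫ ξ, F ξ ∂(γ (cube d m) ω)) ∂μ
            ≤ ∫ _ω, (∫ ξ, F ξ ∂(γ (cube d m) (fun _ => true))) ∂μ :=
              integral_mono hint (integrable_const _) hpt
          _ = ∫ ξ, F ξ ∂(γ (cube d m) (fun _ => true)) := by simp
      · rw [integral_undef hint]; exact hc0
    exact ge_of_tendsto (hweak F hFc) (Eventually.of_forall step)
  -- Step 1: the claim for measurable increasing sets.
  have hset : ∀ A : Set ((Fin d → ℤ) → Bool), MeasurableSet A →
      (∀ ⦃a b : (Fin d → ℤ) → Bool⦄, a ≤ b → a ∈ A → b ∈ A) → μ A ≤ νp A := by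
    intro A hAm hAup
    refine ENNReal.le_of_forall_pos_le_add fun ε hε _ => ?_
    obtain ⟨K, hKA, hKc, hKlt⟩ := hAm.exists_isCompact_lt_add (measure_ne_top μ A)
      (ε := (ε : ENNReal)) (by exact_mod_cast hε.ne')
    have hKm : MeasurableSet K := hKc.isClosed.measurableSet
    -- cylinder approximations of the up-closure of K
    set F : ℕ → ((Fin d → ℤ) → Bool) → ℝ :=
      fun n η => if ∃ ζ ∈ K, ∀ x ∈ cube d n, ζ x ≤ η x then 1 else 0 with hFdef
    have hF0 : ∀ n η, 0 ≤ F n η := by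
      intro n η; simp only [F]; split <;> norm_num
    have hF1 : ∀ n η, F n η ≤ 1 := by
      intro n η; simp only [F]; split <;> norm_num
    have hFone : ∀ n η, F n η ≠ 0 → ∃ ζ ∈ K, ∀ x ∈ cube d n, ζ x ≤ η x := by
      intro n η h
      by_contra hc
      exact h (if_neg hc)
    have hFcont : ∀ n, Continuous (F n) := by
      intro n
      refine continuous_of_depends_on (cube d n) _ ?_
      intro η η' hagree
      simp only [F]
      refine if_congr ?_ rfl rfl
      constructor
      · rintro ⟨ζ, hζ, hle⟩
        exact ⟨ζ, hζ, fun x hx => (hagree x hx) ▸ hle x hx⟩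
      · rintro ⟨ζ, hζ, hle⟩
        exact ⟨ζ, hζ, fun x hx => (hagree x hx) ▸ hle x hx⟩
    have hFmono : ∀ n, Monotone (F n) := by
      intro n η η' hle
      by_cases h : ∃ ζ ∈ K, ∀ x ∈ cube d n, ζ x ≤ η x
      · obtain ⟨ζ, hζ, hζle⟩ := h
        have h' : ∃ ζ ∈ K, ∀ x ∈ cube d n, ζ x ≤ η' x :=
          ⟨ζ, hζ, fun x hx => le_trans (hζle x hx) (hle x)⟩
        have hc : ∃ ζ ∈ K, ∀ x ∈ cube d n, ζ x ≤ η x := ⟨ζ, hζ, hζle⟩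
        simp only [F]
        rw [if_pos hc, if_pos h']
      · simp only [F, if_neg h]
        exact hF0 n η'
    have hFanti : ∀ η, Antitone fun n => F n η := by
      intro η
      refine antitone_nat_of_succ_le fun n => ?_
      by_cases h : ∃ ζ ∈ K, ∀ x ∈ cube d (n + 1), ζ x ≤ η x
      · obtain ⟨ζ, hζ, hζle⟩ := h
        have h' : ∃ ζ ∈ K, ∀ x ∈ cube d n, ζ x ≤ η x :=
          ⟨ζ, hζ, fun x hx => hζle x (cube_mono (Nat.le_succ n) hx)⟩
        have hc : ∃ ζ ∈ K, ∀ x ∈ cube d (n + 1), ζ x ≤ η x := ⟨ζ, hζ, hζle⟩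
        simp only [F]
        rw [if_pos hc, if_pos h']
      · simp only [F, if_neg h]
        exact hF0 n η
    have hFK : ∀ n (η : (Fin d → ℤ) → Bool), η ∈ K → F n η = 1 := by
      intro n η hη
      exact if_pos ⟨η, hη, fun x _ => le_refl _⟩
    set g : ((Fin d → ℤ) → Bool) → ℝ := fun η => ⨅ n, F n η with hg
    have hbdd : ∀ η, BddBelow (Set.range fun n => F n η) :=
      fun η => ⟨0, by rintro _ ⟨n, rfl⟩; exact hF0 n η⟩
    have hgtend : ∀ η, Tendsto (fun n => F n η) atTop (nhds (g η)) :=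
      fun η => tendsto_atTop_ciInf (hFanti η) (hbdd η)
    have hg0 : ∀ η, 0 ≤ g η := fun η => le_ciInf fun n => hF0 n η
    have hgA : ∀ η, g η ≤ Set.indicator A (fun _ => (1 : ℝ)) η := by
      intro η
      by_cases hηA : η ∈ A
      · rw [Set.indicator_of_mem hηA]
        exact (ciInf_le (hbdd η) 0).trans (hF1 0 η)
      · rw [Set.indicator_of_notMem hηA]
        suffices hex : ∃ n, F n η = 0 by
          obtain ⟨n, hn⟩ := hex
          exact le_of_le_of_eq (ciInf_le (hbdd η) n) hn
        by_contra hno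
        push_neg at hno
        have hall : ∀ n, ∃ ζ ∈ K, ∀ x ∈ cube d n, ζ x ≤ η x :=
          fun n => hFone n η (hno n)
        choose ζs hζK hζle using hall
        obtain ⟨ζ, hζK', φ, hφ, hφt⟩ := hKc.tendsto_subseq hζK
        have hζη : ζ ≤ η := by
          intro x
          have hx : ∀ᶠ k in atTop, (ζs ∘ φ) k x = ζ x := by
            have h2 := ((continuous_apply x).tendsto ζ).comp hφt
            rw [nhds_discrete Bool] at h2
            exact tendsto_pure.mp h2
          set N := Finset.univ.sup fun i : Fin d => (x i).natAbs with hN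
          obtain ⟨k, hk1, hk2⟩ := (hx.and (eventually_ge_atTop N)).exists
          have hxcube : x ∈ cube d (φ k) :=
            mem_cube_of_le x fun i =>
              le_trans
                (Finset.le_sup (f := fun i : Fin d => (x i).natAbs) (Finset.mem_univ i))
                (le_trans hk2 hφ.le_apply)
          calc ζ x = ζs (φ k) x := hk1.symm
            _ ≤ η x := hζle (φ k) x hxcube
        exact hηA (hAup hζη (hKA hζK'))
    have hFint : ∀ (n : ℕ) (ρ : Measure ((Fin d → ℤ) → Bool)),
        IsProbabilityMeasure ρ → Integrable (F n) ρ := by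
      intro n ρ _
      refine Integrable.mono' (integrable_const 1)
        (hFcont n).measurable.aestronglyMeasurable (ae_of_all _ fun η => ?_)
      rw [Real.norm_eq_abs, abs_of_nonneg (hF0 n η)]
      exact hF1 n η
    have h1 : ∀ n, (μ K).toReal ≤ ∫ η, F n η ∂μ := by
      intro n
      rw [show (μ K).toReal = μ.real K from rfl, ← integral_indicator_one hKm]
      refine integral_mono ((integrable_const (1 : ℝ)).indicator hKm)
        (hFint n μ inferInstance) fun η => ?_
      by_cases hη : η ∈ K
      · rw [Set.indicator_of_mem hη]
        exact (hFK n η hη).ge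
      · rw [Set.indicator_of_notMem hη]
        exact hF0 n η
    have h2 : ∀ n, ∫ η, F n η ∂μ ≤ ∫ η, F n η ∂νp :=
      fun n => key (F n) (hFcont n) (hFmono n) (hF0 n) (hF1 n)
    have h3 : Tendsto (fun n => ∫ η, F n η ∂νp) atTop (nhds (∫ η, g η ∂νp)) := by
      refine tendsto_integral_of_dominated_convergence (fun _ => 1)
        (fun n => (hFcont n).measurable.aestronglyMeasurable)
        (integrable_const 1) (fun n => ae_of_all _ fun η => ?_)
        (ae_of_all _ hgtend)
      rw [Real.norm_eq_abs, abs_of_nonneg (hF0 n η)]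
      exact hF1 n η
    have hgint : Integrable g νp := by
      refine Integrable.mono' (integrable_const 1)
        (aestronglyMeasurable_of_tendsto_ae atTop
          (fun n => (hFcont n).measurable.aestronglyMeasurable)
          (ae_of_all _ hgtend)) (ae_of_all _ fun η => ?_)
      rw [Real.norm_eq_abs, abs_of_nonneg (hg0 η)]
      exact (ciInf_le (hbdd η) 0).trans (hF1 0 η)
    have h4 : ∫ η, g η ∂νp ≤ (νp A).toReal := by
      rw [show (νp A).toReal = νp.real A from rfl, ← integral_indicator_one hAm]
      exact integral_mono hgint ((integrable_const 1).indicator hAm) hgA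
    have h5 : (μ K).toReal ≤ (νp A).toReal :=
      le_trans (ge_of_tendsto h3
        (Eventually.of_forall fun n => le_trans (h1 n) (h2 n))) h4
    have h6 : μ K ≤ νp A := by
      rw [← ENNReal.ofReal_toReal (measure_ne_top μ K),
        ← ENNReal.ofReal_toReal (measure_ne_top νp A)]
      exact ENNReal.ofReal_le_ofReal h5
    calc μ A ≤ μ K + ε := hKlt.le
      _ ≤ νp A + ε := add_le_add h6 le_rfl
  -- Step 2: layer-cake extension to bounded increasing measurable functions.
  intro f hfm hfmeas hb
  obtain ⟨M, hfM⟩ := hb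
  have hM0 : 0 ≤ M := le_trans (abs_nonneg _) (hfM fun _ => true)
  set g : ((Fin d → ℤ) → Bool) → ℝ := fun η => f η + M with hgdef
  have hg0 : ∀ η, 0 ≤ g η := by
    intro η
    have := (abs_le.1 (hfM η)).1
    simp only [g]
    linarith
  have hg2M : ∀ η, g η ≤ 2 * M := by
    intro η
    have := (abs_le.1 (hfM η)).2
    simp only [g]
    linarith
  have hgmeas : Measurable g := hfmeas.add_const M
  have hgmono : Monotone g := fun a b hab => add_le_add (hfm hab) le_rfl
  have hfint : ∀ (ρ : Measure ((Fin d → ℤ) → Bool)), IsProbabilityMeasure ρ →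
      Integrable f ρ := by
    intro ρ _
    exact Integrable.mono' (integrable_const M) hfmeas.aestronglyMeasurable
      (ae_of_all _ fun η => hfM η)
  have hgint : ∀ (ρ : Measure ((Fin d → ℤ) → Bool)), IsProbabilityMeasure ρ →
      Integrable g ρ := by
    intro ρ _
    refine Integrable.mono' (integrable_const (2 * M)) hgmeas.aestronglyMeasurable
      (ae_of_all _ fun η => ?_)
    rw [Real.norm_eq_abs, abs_of_nonneg (hg0 η)]
    exact hg2M η
  have hlcμ := (hgint μ inferInstance).integral_eq_integral_meas_lt (ae_of_all _ hg0)
  have hlcν := (hgint νp inferInstance).integral_eq_integral_meas_lt (ae_of_all _ hg0)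
  have hΦle : ∀ t : ℝ, (μ {a | t < g a}).toReal ≤ (νp {a | t < g a}).toReal := by
    intro t
    have hSm : MeasurableSet {a | t < g a} := measurableSet_lt measurable_const hgmeas
    have hSup : ∀ ⦃a b : (Fin d → ℤ) → Bool⦄, a ≤ b →
        a ∈ {a | t < g a} → b ∈ {a | t < g a} :=
      fun a b hab ha => lt_of_lt_of_le ha (hgmono hab)
    exact ENNReal.toReal_mono (measure_ne_top νp _) (hset _ hSm hSup)
  have hΦint : ∀ (ρ : Measure ((Fin d → ℤ) → Bool)), IsProbabilityMeasure ρ →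
      IntegrableOn (fun t => (ρ {a | t < g a}).toReal) (Set.Ioi (0 : ℝ)) := by
    intro ρ _
    have hanti : Antitone fun t => (ρ {a | t < g a}).toReal := by
      intro s t hst
      exact ENNReal.toReal_mono (measure_ne_top ρ _)
        (measure_mono fun a ha => lt_of_le_of_lt hst ha)
    refine Integrable.mono'
      (g := fun t => (Set.Ioc (0 : ℝ) (2 * M)).indicator (fun _ => (1 : ℝ)) t)
      ?_ hanti.measurable.aestronglyMeasurable ?_
    · exact ((integrable_indicator_iff measurableSet_Ioc).2
        (integrableOn_const measure_Ioc_lt_top.ne)).restrict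
    · refine (ae_restrict_iff' measurableSet_Ioi).2 (ae_of_all _ fun t ht => ?_)
      rw [Real.norm_eq_abs, abs_of_nonneg ENNReal.toReal_nonneg]
      show (ρ {a | t < g a}).toReal ≤ (Set.Ioc (0 : ℝ) (2 * M)).indicator (fun _ => (1 : ℝ)) t
      by_cases h2 : t ≤ 2 * M
      · rw [Set.indicator_of_mem (Set.mem_Ioc.2 ⟨ht, h2⟩)]
        have hle : ρ {a | t < g a} ≤ 1 := prob_le_one
        calc (ρ {a | t < g a}).toReal ≤ (1 : ENNReal).toReal :=
              ENNReal.toReal_mono (by simp) hle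
          _ = 1 := by simp
      · rw [Set.indicator_of_notMem fun hc => h2 (Set.mem_Ioc.1 hc).2]
        have hempty : {a | t < g a} = ∅ :=
          Set.eq_empty_iff_forall_notMem.2 fun a ha =>
            absurd (lt_of_le_of_lt (hg2M a) (lt_of_not_ge h2)) (lt_asymm ha)
        simp [hempty]
  have hmain : ∫ η, g η ∂μ ≤ ∫ η, g η ∂νp := by
    rw [hlcμ, hlcν]
    exact setIntegral_mono_on (hΦint μ inferInstance) (hΦint νp inferInstance)
      measurableSet_Ioi fun t _ => hΦle t
  have e1 : ∫ η, g η ∂μ = (∫ η, f η ∂μ) + M := by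
    simp only [g]
    rw [integral_add (hfint μ inferInstance) (integrable_const M)]
    simp
  have e2 : ∫ η, g η ∂νp = (∫ η, f η ∂νp) + M := by
    simp only [g]
    rw [integral_add (hfint νp inferInstance) (integrable_const M)]
    simp
  rw [e1, e2] at hmain
  linarith
end
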